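/- arXiv:1305.6885 — 2 statements merged into one kernel-verified Lean document; each statement's English description precedes it below -/
import Mathlib

section
/- Let G be a Menger algebra of rank n, H a strong subset of G, and X an equivalence class of R_H with X ≠ W_H. Then X is a strong subset of G, W_H ⊆ W_X, R_H ⊆ R_X, and the restrictions of R_H and R_X to G \ W_X coincide: R_H ∩ (G \ W_X) × (G \ W_X) = R_X ∩ (G \ W_X) × (G \ W_X). -/
/-- Superassociativity of the (n+1)-ary Menger operation. -/
def SuperAssoc {G : Type*} (n : ℕ) (op : G → (Fin n → G) → G) : Prop :=
  ∀ (f : G) (g h : Fin n → G), op (op f g) h = op f (fun i => op (g i) h)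

/-- The set `T_n(G)` of elementary translations. -/
inductive IsTranslation {G : Type*} (n : ℕ) (op : G → (Fin n → G) → G) : (G → G) → Prop
  | id : IsTranslation n op (fun x => x)
  | step (t : G → G) (ht : IsTranslation n op t) (a : G) (i : Fin n) (b : Fin n → G) :
      IsTranslation n op (fun x => op a (Function.update b i (t x)))

/-- `ρ_H⟨a⟩ = {t ∈ T_n(G) | t(a) ∈ H}`. -/
def rhoSet {G : Type*} (n : ℕ) (op : G → (Fin n → G) → G) (H : Set G) (a : G) :
    Set (G → G) :=
  {t | IsTranslation n op t ∧ t a ∈ H}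

/-- `ρ°_H⟨t⟩ = {a ∈ G | t(a) ∈ H}`. -/
def rhoCirc {G : Type*} (n : ℕ) (op : G → (Fin n → G) → G) (H : Set G) (t : G → G) :
    Set G :=
  {a | t a ∈ H}

/-- `W_H = {a ∈ G | ρ_H⟨a⟩ = ∅}`. -/
def WH {G : Type*} (n : ℕ) (op : G → (Fin n → G) → G) (H : Set G) : Set G :=
  {a | rhoSet n op H a = ∅}

/-- `R_H = {(a,b) | ρ_H⟨a⟩ = ρ_H⟨b⟩}`. -/
def RH {G : Type*} (n : ℕ) (op : G → (Fin n → G) → G) (H : Set G) : G → G → Prop :=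
  fun a b => rhoSet n op H a = rhoSet n op H b

/-- A subset `H` is strong. -/
def Strong {G : Type*} (n : ℕ) (op : G → (Fin n → G) → G) (H : Set G) : Prop :=
  ∀ a b : G, (rhoSet n op H a ∩ rhoSet n op H b).Nonempty →
    rhoSet n op H a = rhoSet n op H b

/-- Composition of elementary translations is an elementary translation. -/
lemma trans_comp {G : Type*} {n : ℕ} {op : G → (Fin n → G) → G} {s t : G → G}
    (hs : IsTranslation n op s) (ht : IsTranslation n op t) :
    IsTranslation n op (fun x => s (t x)) := by
  induction hs with
  | id => exact ht
  | step s' hs' a i b ih => exact IsTranslation.step _ ih a i b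

/-- `R_H` is preserved by translations (one inclusion). -/
lemma rho_trans_subset {G : Type*} {n : ℕ} {op : G → (Fin n → G) → G} {H : Set G}
    {c d : G} (hH : rhoSet n op H c = rhoSet n op H d) {t : G → G}
    (ht : IsTranslation n op t) :
    rhoSet n op H (t c) ⊆ rhoSet n op H (t d) := by
  rintro s ⟨hst, hmem⟩
  have h1 : (fun x => s (t x)) ∈ rhoSet n op H c := ⟨trans_comp hst ht, hmem⟩
  rw [hH] at h1
  exact ⟨hst, h1.2⟩

/-- `R_H` is preserved by translations. -/
lemma rho_trans {G : Type*} {n : ℕ} {op : G → (Fin n → G) → G} {H : Set G}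
    {c d : G} (hH : rhoSet n op H c = rhoSet n op H d) {t : G → G}
    (ht : IsTranslation n op t) :
    rhoSet n op H (t c) = rhoSet n op H (t d) :=
  Set.Subset.antisymm (rho_trans_subset hH ht) (rho_trans_subset hH.symm ht)

theorem stmt7 {G : Type*} [Nonempty G] {n : ℕ} (hn : 1 ≤ n)
    (op : G → (Fin n → G) → G) (hop : SuperAssoc n op) (H : Set G) (hs : Strong n op H)
    (X : Set G) (hX : ∃ a : G, X = {b | RH n op H a b}) (hXW : X ≠ WH n op H) :
    Strong n op X ∧ WH n op H ⊆ WH n op X ∧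
    (∀ a b : G, RH n op H a b → RH n op X a b) ∧
    (∀ a b : G, a ∉ WH n op X → b ∉ WH n op X → (RH n op H a b ↔ RH n op X a b)) := by
  obtain ⟨a, rfl⟩ := hX
  -- ρ_H⟨a⟩ is nonempty since X ≠ W_H
  have ha_ne : (rhoSet n op H a).Nonempty := by
    by_contra h
    rw [Set.not_nonempty_iff_eq_empty] at h
    apply hXW
    ext b
    simp only [Set.mem_setOf_eq, RH, WH, h]
    exact ⟨fun hb => hb.symm, fun hb => hb.symm⟩
  obtain ⟨u, hut, huH⟩ := ha_ne
  -- R_H ⊆ R_X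
  have hHX : ∀ c d : G, RH n op H c d → RH n op H a ∘ id = RH n op H a ∘ id := fun _ _ _ => rfl
  have hRHX : ∀ c d : G, RH n op H c d →
      RH n op {b | RH n op H a b} c d := by
    intro c d hcd
    have hcd' : rhoSet n op H c = rhoSet n op H d := hcd
    ext t
    constructor
    · rintro ⟨htt, hmem⟩
      refine ⟨htt, ?_⟩
      have hm : rhoSet n op H a = rhoSet n op H (t c) := hmem
      exact hm.trans (rho_trans hcd' htt)
    · rintro ⟨htt, hmem⟩
      refine ⟨htt, ?_⟩
      have hm : rhoSet n op H a = rhoSet n op H (t d) := hmem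
      exact hm.trans (rho_trans hcd'.symm htt)
  -- key backward step: common element of X reached from c and d forces R_H c d
  have hback : ∀ (c d : G) (t : G → G), IsTranslation n op t →
      t c ∈ {b | RH n op H a b} → t d ∈ {b | RH n op H a b} → RH n op H c d := by
    intro c d t htt hc hd
    have hc' : rhoSet n op H a = rhoSet n op H (t c) := hc
    have hd' : rhoSet n op H a = rhoSet n op H (t d) := hd
    have huc : u ∈ rhoSet n op H (t c) := hc' ▸ ⟨hut, huH⟩
    have hud : u ∈ rhoSet n op H (t d) := hd' ▸ ⟨hut, huH⟩
    have h1 : (fun x => u (t x)) ∈ rhoSet n op H c := ⟨trans_comp hut htt, huc.2⟩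
    have h2 : (fun x => u (t x)) ∈ rhoSet n op H d := ⟨trans_comp hut htt, hud.2⟩
    exact hs c d ⟨_, h1, h2⟩
  refine ⟨?_, ?_, hRHX, ?_⟩
  · -- X is strong
    rintro c d ⟨t, ⟨htt, hc⟩, ⟨-, hd⟩⟩
    exact hRHX c d (hback c d t htt hc hd)
  · -- W_H ⊆ W_X
    intro c hc
    have hc' : rhoSet n op H c = ∅ := hc
    show rhoSet n op {b | RH n op H a b} c = ∅
    ext t
    simp only [Set.mem_empty_iff_false, iff_false]
    rintro ⟨htt, hmem⟩
    have hm : rhoSet n op H a = rhoSet n op H (t c) := hmem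
    have huc : u ∈ rhoSet n op H (t c) := hm ▸ ⟨hut, huH⟩
    have h1 : (fun x => u (t x)) ∈ rhoSet n op H c := ⟨trans_comp hut htt, huc.2⟩
    rw [hc'] at h1
    exact h1
  · -- restrictions coincide
    intro c d hcW hdW
    refine ⟨hRHX c d, fun hRX => ?_⟩
    have hc_ne : (rhoSet n op {b | RH n op H a b} c).Nonempty := by
      rw [Set.nonempty_iff_ne_empty]; exact hcW
    obtain ⟨t, htt, hc⟩ := hc_ne
    have hRX' : rhoSet n op {b | RH n op H a b} c
        = rhoSet n op {b | RH n op H a b} d := hRX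
    have htd : t ∈ rhoSet n op {b | RH n op H a b} d := hRX' ▸ ⟨htt, hc⟩
    exact hback c d t htt hc htd.2
end

section
/- Let G be a Menger algebra of rank n and H a nonempty subset of G. Then the relation P_H = {(g₁, g₂) ∈ G × G | σ_H⟨g₁⟩ = σ_H⟨g₂⟩} is a congruence on G (an equivalence relation that is both l-regular and v-regular). Moreover, if the set W^H = {g ∈ G | σ_H⟨g⟩ = ∅} is nonempty, then W^H is both an s-ideal and an l-ideal of G. -/
/-- The action of `B = Gⁿ ∪ {ē}` on `G`; `none` plays the role of `ē`. -/
def act {G : Type*} (n : ℕ) (op : G → (Fin n → G) → G) : G → Option (Fin n → G) → G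
  | g, none => g
  | g, some x => op g x

/-- `η_H⟨g⟩ = {x̄ ∈ B | g[x̄] ∈ H}`. -/
def etaSet {G : Type*} (n : ℕ) (op : G → (Fin n → G) → G) (H : Set G) (g : G) :
    Set (Option (Fin n → G)) :=
  {x | act n op g x ∈ H}

/-- `η°_H⟨x̄⟩ = {g ∈ G | g[x̄] ∈ H}`. -/
def etaCirc {G : Type*} (n : ℕ) (op : G → (Fin n → G) → G) (H : Set G)
    (x : Option (Fin n → G)) : Set G :=
  {g | act n op g x ∈ H}

/-- `_H W = {g ∈ G | η_H⟨g⟩ = ∅}`. -/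
def WL {G : Type*} (n : ℕ) (op : G → (Fin n → G) → G) (H : Set G) : Set G :=
  {g | etaSet n op H g = ∅}

/-- `L_H = {(g₁,g₂) | η_H⟨g₁⟩ = η_H⟨g₂⟩}`. -/
def LH {G : Type*} (n : ℕ) (op : G → (Fin n → G) → G) (H : Set G) : G → G → Prop :=
  fun a b => etaSet n op H a = etaSet n op H b

/-- A subset `H` is l-strong. -/
def LStrong {G : Type*} (n : ℕ) (op : G → (Fin n → G) → G) (H : Set G) : Prop :=
  ∀ a b : G, (etaSet n op H a ∩ etaSet n op H b).Nonempty →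
    etaSet n op H a = etaSet n op H b

/-- `σ_H⟨g⟩ = {(x̄,t) ∈ B × T_n(G) | t(g[x̄]) ∈ H}`. -/
def sigmaSet {G : Type*} (n : ℕ) (op : G → (Fin n → G) → G) (H : Set G) (g : G) :
    Set (Option (Fin n → G) × (G → G)) :=
  {p | IsTranslation n op p.2 ∧ p.2 (act n op g p.1) ∈ H}

/-- `σ°_H⟨x̄,t⟩ = {g ∈ G | t(g[x̄]) ∈ H}`. -/
def sigmaCirc {G : Type*} (n : ℕ) (op : G → (Fin n → G) → G) (H : Set G)
    (x : Option (Fin n → G)) (t : G → G) : Set G :=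
  {g | t (act n op g x) ∈ H}

/-- `W^H = {g ∈ G | σ_H⟨g⟩ = ∅}`. -/
def WP {G : Type*} (n : ℕ) (op : G → (Fin n → G) → G) (H : Set G) : Set G :=
  {g | sigmaSet n op H g = ∅}

/-- `P_H = {(g₁,g₂) | σ_H⟨g₁⟩ = σ_H⟨g₂⟩}`. -/
def PH {G : Type*} (n : ℕ) (op : G → (Fin n → G) → G) (H : Set G) : G → G → Prop :=
  fun a b => sigmaSet n op H a = sigmaSet n op H b

/-- A subset `H` is bistrong. -/
def Bistrong {G : Type*} (n : ℕ) (op : G → (Fin n → G) → G) (H : Set G) : Prop :=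
  ∀ a b : G, (sigmaSet n op H a ∩ sigmaSet n op H b).Nonempty →
    sigmaSet n op H a = sigmaSet n op H b

/-!
`P_H` is the kernel of `g ↦ σ_H⟨g⟩` and `W^H` is the preimage of `∅`. By superassociativity,
`σ_H⟨g[z̄]⟩` is the pullback of `σ_H⟨g⟩` along `x̄ ↦ z̄ * x̄`, which gives l-regularity and the
s-ideal property. Substituting into one argument of `z[x₁ … xₙ]` is itself an elementary
translation, so `t(z[x̄])` and `t(z[ȳ])` can be compared by exchanging `xᵢ` for `yᵢ` one coordinate
at a time; this gives v-regularity and the l-ideal property.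
-/

section Menger

variable {G : Type*} {n : ℕ} {op : G → (Fin n → G) → G} {H : Set G}

theorem IsTranslation.comp {s t : G → G} (hs : IsTranslation n op s)
    (ht : IsTranslation n op t) : IsTranslation n op (s ∘ t) := by
  induction hs with
  | id => exact ht
  | step s _ a i b ih => exact IsTranslation.step _ ih a i b

theorem act_op (hop : SuperAssoc n op) (g : G) (z : Fin n → G) (w : Option (Fin n → G)) :
    act n op (op g z) w = op g (fun i => act n op (z i) w) := by
  cases w with
  | none => rfl
  | some w => exact hop g z w

theorem mem_sigmaSet_op (hop : SuperAssoc n op) {g : G} {z : Fin n → G}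
    {p : Option (Fin n → G) × (G → G)} :
    p ∈ sigmaSet n op H (op g z) ↔
      (some fun i => act n op (z i) p.1, p.2) ∈ sigmaSet n op H g := by
  simp only [sigmaSet, Set.mem_ofPred_eq, act_op hop]
  rfl

theorem mem_sigmaSet_comp_update {t : G → G} (ht : IsTranslation n op t) (a : G) (i : Fin n)
    (b : Fin n → G) (g : G) (w : Option (Fin n → G)) :
    (w, fun u => t (op a (Function.update b i u))) ∈ sigmaSet n op H g ↔
      t (op a (Function.update b i (act n op g w))) ∈ H :=
  and_iff_right (ht.comp (IsTranslation.step _ IsTranslation.id a i b))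

theorem PH_op_left (hop : SuperAssoc n op) {a b : G} (h : PH n op H a b) (z : Fin n → G) :
    PH n op H (op a z) (op b z) := by
  ext p
  rw [mem_sigmaSet_op hop, mem_sigmaSet_op hop, h]

theorem PH_act (hop : SuperAssoc n op) {a b : G} (h : PH n op H a b)
    (w : Option (Fin n → G)) : PH n op H (act n op a w) (act n op b w) := by
  cases w with
  | none => exact h
  | some z => exact PH_op_left hop h z

theorem translation_op_mem_iff_of_PH {x y : Fin n → G} (hxy : ∀ i, PH n op H (x i) (y i))
    {t : G → G} (ht : IsTranslation n op t) (z : G) :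
    t (op z x) ∈ H ↔ t (op z y) ∈ H := by
  classical
  suffices ∀ s : Finset (Fin n), t (op z x) ∈ H ↔ t (op z (s.piecewise y x)) ∈ H by
    simpa only [Finset.piecewise_univ] using this Finset.univ
  intro s
  induction s using Finset.induction_on with
  | empty => rw [Finset.piecewise_empty]
  | insert i s hi ih =>
    have hx : Function.update (s.piecewise y x) i (x i) = s.piecewise y x := by
      rw [Function.update_eq_self_iff, Finset.piecewise_eq_of_notMem _ _ _ hi]
    have hswap := Set.ext_iff.mp (hxy i)
      (none, fun u => t (op z (Function.update (s.piecewise y x) i u)))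
    rw [mem_sigmaSet_comp_update ht, mem_sigmaSet_comp_update ht] at hswap
    rw [ih, Finset.piecewise_insert]
    conv_lhs => rw [← hx]
    exact hswap

theorem PH_op_right (hop : SuperAssoc n op) (z : G) {x y : Fin n → G}
    (hxy : ∀ i, PH n op H (x i) (y i)) : PH n op H (op z x) (op z y) := by
  ext ⟨w, t⟩
  rw [mem_sigmaSet_op hop, mem_sigmaSet_op hop]
  exact and_congr_right fun ht =>
    translation_op_mem_iff_of_PH (fun i => PH_act hop (hxy i) w) ht z

theorem op_mem_WP_of_left_mem (hop : SuperAssoc n op) {h : G} (hh : h ∈ WP n op H)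
    (x : Fin n → G) : op h x ∈ WP n op H :=
  Set.eq_empty_of_forall_notMem fun _ hp =>
    Set.eq_empty_iff_forall_notMem.mp hh _ ((mem_sigmaSet_op hop).mp hp)

theorem op_mem_WP_of_arg_mem (hop : SuperAssoc n op) (x : G) {h : Fin n → G} {i : Fin n}
    (hi : h i ∈ WP n op H) : op x h ∈ WP n op H := by
  refine Set.eq_empty_of_forall_notMem fun ⟨w, t⟩ hp => ?_
  obtain ⟨ht, hmem⟩ := (mem_sigmaSet_op hop).mp hp
  refine Set.eq_empty_iff_forall_notMem.mp hi
    (w, fun u => t (op x (Function.update (fun j => act n op (h j) w) i u))) ?_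
  rwa [mem_sigmaSet_comp_update ht, Function.update_eq_self]

end Menger

theorem stmt18_general {G : Type*} {n : ℕ}
    (op : G → (Fin n → G) → G) (hop : SuperAssoc n op) (H : Set G) :
    (Equivalence (PH n op H) ∧
     (∀ (a b : G) (z : Fin n → G), PH n op H a b → PH n op H (op a z) (op b z)) ∧
     (∀ (z : G) (x y : Fin n → G), (∀ i, PH n op H (x i) (y i)) →
        PH n op H (op z x) (op z y))) ∧
    ((WP n op H).Nonempty →
      (∀ h ∈ WP n op H, ∀ x : Fin n → G, op h x ∈ WP n op H) ∧
      (∀ (x : G) (h : Fin n → G), (∃ i, h i ∈ WP n op H) → op x h ∈ WP n op H)) :=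
  ⟨⟨⟨fun _ => rfl, Eq.symm, Eq.trans⟩,
      fun _ _ z h => PH_op_left hop h z,
      fun z _ _ hxy => PH_op_right hop z hxy⟩,
    fun _ => ⟨fun _ hh x => op_mem_WP_of_left_mem hop hh x,
      fun x _ ⟨_, hi⟩ => op_mem_WP_of_arg_mem hop x hi⟩⟩

theorem stmt18 {G : Type*} [Nonempty G] {n : ℕ} (hn : 1 ≤ n)
    (op : G → (Fin n → G) → G) (hop : SuperAssoc n op) (H : Set G) (hne : H.Nonempty) :
    (Equivalence (PH n op H) ∧
     (∀ (a b : G) (z : Fin n → G), PH n op H a b → PH n op H (op a z) (op b z)) ∧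
     (∀ (z : G) (x y : Fin n → G), (∀ i, PH n op H (x i) (y i)) →
        PH n op H (op z x) (op z y))) ∧
    ((WP n op H).Nonempty →
      (∀ h ∈ WP n op H, ∀ x : Fin n → G, op h x ∈ WP n op H) ∧
      (∀ (x : G) (h : Fin n → G), (∃ i, h i ∈ WP n op H) → op x h ∈ WP n op H)) :=
  stmt18_general op hop H
end
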